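/- arXiv:1712.01777 — 4 statements merged into one kernel-verified Lean document; each statement's English description precedes it below -/
import Mathlib

section
/- Let U and V be n-dimensional random vectors with densities f_U and f_V (with respect to Lebesgue measure) that are nonzero almost everywhere on R^n. Then the total variation distance between U and V equals the integral over x in [0,1] of P(f_U(V)/f_V(V) < x) dx. -/
open MeasureTheory ProbabilityTheory

open scoped ENNReal

/-- The total variation distance between random vectors `U` and `V` with a.e. nonzero
densities `fU`, `fV` equals `∫_0^1 P(fU(V)/fV(V) < x) dx`. -/
theorem stmt0 {n : ℕ} {Ω : Type*} [MeasureSpace Ω] [IsProbabilityMeasure (ℙ : Measure Ω)]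
    (U V : Ω → (Fin n → ℝ)) (hU : Measurable U) (hV : Measurable V)
    (fU fV : (Fin n → ℝ) → ℝ) (hfUm : Measurable fU) (hfVm : Measurable fV)
    (hfU0 : ∀ᵐ r ∂(volume : Measure (Fin n → ℝ)), 0 ≤ fU r)
    (hfV0 : ∀ᵐ r ∂(volume : Measure (Fin n → ℝ)), 0 ≤ fV r)
    (hfUne : ∀ᵐ r ∂(volume : Measure (Fin n → ℝ)), fU r ≠ 0)
    (hfVne : ∀ᵐ r ∂(volume : Measure (Fin n → ℝ)), fV r ≠ 0)
    (hUd : Measure.map U ℙ = volume.withDensity fun r => ENNReal.ofReal (fU r))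
    (hVd : Measure.map V ℙ = volume.withDensity fun r => ENNReal.ofReal (fV r)) :
    (1 / 2) * ∫ r, |fV r - fU r| =
      ∫ x in (0:ℝ)..1, (ℙ {ω | fU (V ω) / fV (V ω) < x}).toReal := by
  have hprobU : IsProbabilityMeasure (Measure.map U ℙ) :=
    Measure.isProbabilityMeasure_map hU.aemeasurable
  have hprobV : IsProbabilityMeasure (Measure.map V ℙ) :=
    Measure.isProbabilityMeasure_map hV.aemeasurable
  -- lintegrals of the densities are 1
  have hlU : ∫⁻ r, ENNReal.ofReal (fU r) = 1 := by
    have h := hprobU.measure_univ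
    rw [hUd] at h
    simpa [withDensity_apply _ MeasurableSet.univ] using h
  have hlV : ∫⁻ r, ENNReal.ofReal (fV r) = 1 := by
    have h := hprobV.measure_univ
    rw [hVd] at h
    simpa [withDensity_apply _ MeasurableSet.univ] using h
  -- integrability
  have hintU : Integrable fU := by
    refine ⟨hfUm.aestronglyMeasurable, ?_⟩
    rw [hasFiniteIntegral_iff_ofReal hfU0, hlU]
    exact ENNReal.one_lt_top
  have hintV : Integrable fV := by
    refine ⟨hfVm.aestronglyMeasurable, ?_⟩
    rw [hasFiniteIntegral_iff_ofReal hfV0, hlV]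
    exact ENNReal.one_lt_top
  have hIU : ∫ r, fU r = 1 := by
    rw [integral_eq_lintegral_of_nonneg_ae hfU0 hfUm.aestronglyMeasurable, hlU]
    simp
  have hIV : ∫ r, fV r = 1 := by
    rw [integral_eq_lintegral_of_nonneg_ae hfV0 hfVm.aestronglyMeasurable, hlV]
    simp
  have hzero : ∫ r, (fV r - fU r) = 0 := by
    rw [integral_sub hintV hintU, hIU, hIV]; ring
  have hintsub : Integrable (fun r => fV r - fU r) := hintV.sub hintU
  have hintmax : Integrable (fun r => max (fV r - fU r) 0) := hintsub.pos_part
  -- LHS equals ∫ max (fV - fU) 0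
  have hLHS : (1 / 2) * ∫ r, |fV r - fU r| = ∫ r, max (fV r - fU r) 0 := by
    have habs : ∀ r, |fV r - fU r| = 2 * max (fV r - fU r) 0 - (fV r - fU r) := by
      intro r
      rcases le_total (fV r - fU r) 0 with h | h
      · rw [max_eq_right h, abs_of_nonpos h]; ring
      · rw [max_eq_left h, abs_of_nonneg h]; ring
    rw [integral_congr_ae (Filter.Eventually.of_forall habs),
      integral_sub (hintmax.const_mul 2) hintsub, integral_const_mul, hzero]
    ring
  rw [hLHS]
  have hmeasset : ∀ x : ℝ, MeasurableSet {r | fU r / fV r < x} := fun x =>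
    measurableSet_lt (hfUm.div hfVm) measurable_const
  have hP : ∀ x : ℝ, ℙ {ω | fU (V ω) / fV (V ω) < x}
      = (volume.withDensity fun r => ENNReal.ofReal (fV r)) {r | fU r / fV r < x} := by
    intro x
    rw [← hVd, Measure.map_apply hV (hmeasset x)]
    rfl
  have hνle : ∀ s, (volume.withDensity fun r => ENNReal.ofReal (fV r)) s ≤ 1 := by
    intro s
    rw [← hVd]
    exact prob_le_one
  -- rewrite interval integral as set integral and then lintegral
  have h1 : (∫ x in (0:ℝ)..1, (ℙ {ω | fU (V ω) / fV (V ω) < x}).toReal)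
      = ∫ x in Set.Ioc (0:ℝ) 1,
          ((volume.withDensity fun r => ENNReal.ofReal (fV r)) {r | fU r / fV r < x}).toReal := by
    rw [intervalIntegral.integral_of_le zero_le_one]
    exact setIntegral_congr_fun measurableSet_Ioc fun x _ => by rw [hP x]
  have hmono : Monotone fun x : ℝ =>
      (volume.withDensity fun r => ENNReal.ofReal (fV r)) {r | fU r / fV r < x} := by
    intro x y hxy
    exact measure_mono fun r hr => lt_of_lt_of_le hr hxy
  have h2 : ∫ x in Set.Ioc (0:ℝ) 1,
        ((volume.withDensity fun r => ENNReal.ofReal (fV r)) {r | fU r / fV r < x}).toReal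
      = (∫⁻ x in Set.Ioc (0:ℝ) 1,
          (volume.withDensity fun r => ENNReal.ofReal (fV r)) {r | fU r / fV r < x}).toReal := by
    refine integral_toReal (hmono.measurable.aemeasurable) ?_
    exact Filter.Eventually.of_forall fun x => lt_of_le_of_lt (hνle _) ENNReal.one_lt_top
  -- the main lintegral computation via Fubini
  set S : Set (ℝ × (Fin n → ℝ)) := {p | fU p.2 / fV p.2 < p.1} with hS
  have hSm : MeasurableSet S :=
    measurableSet_lt ((hfUm.comp measurable_snd).div (hfVm.comp measurable_snd)) measurable_fst
  have h3 : ∫⁻ x in Set.Ioc (0:ℝ) 1,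
        (volume.withDensity fun r => ENNReal.ofReal (fV r)) {r | fU r / fV r < x}
      = ∫⁻ x in Set.Ioc (0:ℝ) 1, ∫⁻ r, ENNReal.ofReal (fV r) * S.indicator 1 (x, r) := by
    refine lintegral_congr fun x => ?_
    rw [withDensity_apply _ (hmeasset x), ← lintegral_indicator (hmeasset x)]
    refine lintegral_congr fun r => ?_
    by_cases h : fU r / fV r < x
    · simp [Set.indicator, h, hS]
    · simp [Set.indicator, h, hS]
  have h4 : ∫⁻ x in Set.Ioc (0:ℝ) 1, ∫⁻ r, ENNReal.ofReal (fV r) * S.indicator 1 (x, r)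
      = ∫⁻ r, ∫⁻ x in Set.Ioc (0:ℝ) 1, ENNReal.ofReal (fV r) * S.indicator 1 (x, r) := by
    refine lintegral_lintegral_swap ?_
    exact ((ENNReal.measurable_ofReal.comp (hfVm.comp measurable_snd)).mul
      ((measurable_one.indicator hSm).comp (measurable_fst.prodMk measurable_snd))).aemeasurable
  have h5 : ∀ r, (∫⁻ x in Set.Ioc (0:ℝ) 1, ENNReal.ofReal (fV r) * S.indicator 1 (x, r))
      = ENNReal.ofReal (fV r) *
          ((volume : Measure ℝ).restrict (Set.Ioc (0:ℝ) 1)) (Set.Ioi (fU r / fV r)) := by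
    intro r
    have hm : Measurable fun x : ℝ => S.indicator 1 (x, r) :=
      ((measurable_one : Measurable (1 : ℝ × (Fin n → ℝ) → ℝ≥0∞)).indicator hSm).comp
        measurable_prodMk_right
    rw [lintegral_const_mul _ hm]
    congr 1
    have heq : ∀ x : ℝ, S.indicator 1 (x, r)
        = (Set.Ioi (fU r / fV r)).indicator (fun _ => (1 : ℝ≥0∞)) x := by
      intro x
      by_cases h : fU r / fV r < x
      · simp [Set.indicator, h, hS, Set.mem_Ioi]
      · simp [Set.indicator, h, hS, Set.mem_Ioi]
    simp_rw [heq]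
    rw [lintegral_indicator measurableSet_Ioi]
    simp
  have hfUpos : ∀ᵐ r ∂(volume : Measure (Fin n → ℝ)), 0 < fU r := by
    filter_upwards [hfU0, hfUne] with r ha hb using lt_of_le_of_ne ha (Ne.symm hb)
  have hfVpos : ∀ᵐ r ∂(volume : Measure (Fin n → ℝ)), 0 < fV r := by
    filter_upwards [hfV0, hfVne] with r ha hb using lt_of_le_of_ne ha (Ne.symm hb)
  have h6 : ∫⁻ r, ENNReal.ofReal (fV r) *
        ((volume : Measure ℝ).restrict (Set.Ioc (0:ℝ) 1)) (Set.Ioi (fU r / fV r))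
      = ∫⁻ r, ENNReal.ofReal (fV r - fU r) := by
    refine lintegral_congr_ae ?_
    filter_upwards [hfUpos, hfVpos] with r hU' hV'
    have ht : 0 < fU r / fV r := div_pos hU' hV'
    rw [Measure.restrict_apply measurableSet_Ioi]
    have hset : Set.Ioi (fU r / fV r) ∩ Set.Ioc (0:ℝ) 1 = Set.Ioc (fU r / fV r) 1 := by
      ext x
      simp only [Set.mem_inter_iff, Set.mem_Ioi, Set.mem_Ioc]
      constructor
      · rintro ⟨ha, _, hc⟩; exact ⟨ha, hc⟩
      · rintro ⟨ha, hb⟩; exact ⟨ha, lt_trans ht ha, hb⟩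
    rw [hset, Real.volume_Ioc, ← ENNReal.ofReal_mul hV'.le]
    congr 1
    field_simp
  have hnn : 0 ≤ᵐ[(volume : Measure (Fin n → ℝ))] fun r => max (fV r - fU r) 0 :=
    Filter.Eventually.of_forall fun r => le_max_right _ _
  have h7 : ∫ r, max (fV r - fU r) 0
      = (∫⁻ r, ENNReal.ofReal (fV r - fU r)).toReal := by
    rw [integral_eq_lintegral_of_nonneg_ae hnn
      ((hfVm.sub hfUm).max measurable_const).aestronglyMeasurable]
    congr 1
    refine lintegral_congr fun r => ?_
    rcases le_total (fV r - fU r) 0 with h | h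
    · rw [max_eq_right h, ENNReal.ofReal_zero, ENNReal.ofReal_eq_zero.2 h]
    · rw [max_eq_left h]
  rw [h1, h2, h3, h4]
  simp_rw [h5]
  rw [h6]
  exact h7
end

section
/- Let U and V be n-dimensional random vectors with densities f_U and f_V nonzero almost everywhere on R^n. Then the total variation distance between U and V equals the integral over x in [0,1] of P(f_U(U)/f_V(U) > 1/x) dx. -/
open MeasureTheory ProbabilityTheory
open scoped ENNReal

/-- The total variation distance between random vectors `U` and `V` with a.e. nonzero
densities `fU`, `fV` equals `∫_0^1 P(fU(V)/fV(V) < x) dx`. -/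
theorem stmt2 {n : ℕ} {Ω : Type*} [MeasureSpace Ω] [IsProbabilityMeasure (ℙ : Measure Ω)]
    (U V : Ω → (Fin n → ℝ)) (hU : Measurable U) (hV : Measurable V)
    (fU fV : (Fin n → ℝ) → ℝ) (hfUm : Measurable fU) (hfVm : Measurable fV)
    (hfU0 : ∀ᵐ r ∂(volume : Measure (Fin n → ℝ)), 0 ≤ fU r)
    (hfV0 : ∀ᵐ r ∂(volume : Measure (Fin n → ℝ)), 0 ≤ fV r)
    (hfUne : ∀ᵐ r ∂(volume : Measure (Fin n → ℝ)), fU r ≠ 0)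
    (hfVne : ∀ᵐ r ∂(volume : Measure (Fin n → ℝ)), fV r ≠ 0)
    (hUd : Measure.map U ℙ = volume.withDensity fun r => ENNReal.ofReal (fU r))
    (hVd : Measure.map V ℙ = volume.withDensity fun r => ENNReal.ofReal (fV r)) :
    (1 / 2) * ∫ r, |fV r - fU r| =
      ∫ x in (0:ℝ)..1, (ℙ {ω | 1 / x < fU (U ω) / fV (U ω)}).toReal := by
  set μ : Measure (Fin n → ℝ) := volume with hμ
  -- total mass facts
  have key : ∀ (g : Ω → (Fin n → ℝ)) (f : (Fin n → ℝ) → ℝ), Measurable g → Measurable f →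
      (∀ᵐ r ∂μ, 0 ≤ f r) →
      Measure.map g ℙ = μ.withDensity (fun r => ENNReal.ofReal (f r)) →
      (∫⁻ r, ENNReal.ofReal (f r) ∂μ = 1) ∧ Integrable f μ ∧ ∫ r, f r ∂μ = 1 := by
    intro g f hg hf h0 hd
    have h1 : ∫⁻ r, ENNReal.ofReal (f r) ∂μ = 1 := by
      have := congrArg (fun m => m Set.univ) hd
      simpa [Measure.map_apply hg MeasurableSet.univ] using this.symm
    have hint : Integrable f μ := by
      refine ⟨hf.aestronglyMeasurable, ?_⟩
      rw [hasFiniteIntegral_iff_ofReal h0, h1]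
      exact ENNReal.one_lt_top
    refine ⟨h1, hint, ?_⟩
    rw [integral_eq_lintegral_of_nonneg_ae h0 hf.aestronglyMeasurable, h1]
    simp
  obtain ⟨hU1, hUint, hUi1⟩ := key U fU hU hfUm hfU0 hUd
  obtain ⟨hV1, hVint, hVi1⟩ := key V fV hV hfVm hfV0 hVd
  -- the product-measurable kernel
  set F : (Fin n → ℝ) → ℝ≥0∞ := fun r => ENNReal.ofReal (fU r) with hF
  set T : Set (ℝ × (Fin n → ℝ)) := {p | 1 / p.1 < fU p.2 / fV p.2} with hT
  have hTm : MeasurableSet T :=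
    measurableSet_lt ((measurable_const.div measurable_fst))
      ((hfUm.comp measurable_snd).div (hfVm.comp measurable_snd))
  set k : ℝ × (Fin n → ℝ) → ℝ≥0∞ := T.indicator (fun p => F p.2) with hk
  have hkm : Measurable k := ((hfUm.comp measurable_snd).ennreal_ofReal).indicator hTm
  set S : ℝ → Set (Fin n → ℝ) := fun x => {r | 1 / x < fU r / fV r} with hS
  have hSm : ∀ x, MeasurableSet (S x) :=
    fun x => measurableSet_lt measurable_const (hfUm.div hfVm)
  set H : ℝ → ℝ≥0∞ := fun x => ∫⁻ r, k (x, r) ∂μ with hH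
  have hHm : Measurable H := hkm.lintegral_prod_right'
  -- Step A: the probability equals H x
  have stepA : ∀ x : ℝ, ℙ {ω | 1 / x < fU (U ω) / fV (U ω)} = H x := by
    intro x
    have hpre : {ω | 1 / x < fU (U ω) / fV (U ω)} = U ⁻¹' (S x) := rfl
    have hind : ∀ r, (S x).indicator F r = k (x, r) := by
      intro r
      by_cases h : r ∈ S x
      · rw [Set.indicator_of_mem h, hk, Set.indicator_of_mem (show (x, r) ∈ T from h)]
      · rw [Set.indicator_of_notMem h, hk,
          Set.indicator_of_notMem (show (x, r) ∉ T from h)]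
    rw [hpre, ← Measure.map_apply hU (hSm x), hUd, withDensity_apply _ (hSm x), hH]
    exact (lintegral_indicator (hSm x) F).symm.trans (lintegral_congr hind)
  have hHle : ∀ x, H x ≤ 1 := by
    intro x
    rw [hH, ← hU1]
    refine lintegral_mono fun r => ?_
    exact Set.indicator_le_self _ _ _
  -- Step B: rewrite the interval integral
  have stepB : (∫ x in (0:ℝ)..1, (ℙ {ω | 1 / x < fU (U ω) / fV (U ω)}).toReal)
      = (∫⁻ x in Set.Ioc (0:ℝ) 1, H x).toReal := by
    rw [intervalIntegral.integral_of_le zero_le_one]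
    rw [show (fun x => (ℙ {ω | 1 / x < fU (U ω) / fV (U ω)}).toReal)
        = fun x => (H x).toReal from funext fun x => by rw [stepA x]]
    refine integral_toReal (hHm.aemeasurable.restrict) ?_
    exact Filter.Eventually.of_forall fun x => lt_of_le_of_lt (hHle x) ENNReal.one_lt_top
  -- Step C: Fubini
  have stepC : ∫⁻ x in Set.Ioc (0:ℝ) 1, H x
      = ∫⁻ r, (∫⁻ x in Set.Ioc (0:ℝ) 1, k (x, r)) ∂μ := by
    exact lintegral_lintegral_swap hkm.aemeasurable
  -- Step D: inner integral a.e.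
  have stepD : (fun r => ∫⁻ x in Set.Ioc (0:ℝ) 1, k (x, r))
      =ᵐ[μ] fun r => ENNReal.ofReal (fU r - fV r) := by
    filter_upwards [hfU0, hfV0, hfUne, hfVne] with r hu0 hv0 hune hvne
    have hu : 0 < fU r := lt_of_le_of_ne hu0 (Ne.symm hune)
    have hv : 0 < fV r := lt_of_le_of_ne hv0 (Ne.symm hvne)
    have hc : 0 < fU r / fV r := div_pos hu hv
    have hc' : 0 < fV r / fU r := div_pos hv hu
    set A : Set ℝ := {x : ℝ | 1 / x < fU r / fV r} with hA
    have hAm : MeasurableSet A :=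
      measurableSet_lt (measurable_const.div measurable_id) measurable_const
    have hkr : (fun x => k (x, r)) = A.indicator (fun _ => F r) := by
      funext x
      by_cases h : x ∈ A
      · rw [hk, Set.indicator_of_mem (show (x, r) ∈ T from h),
          Set.indicator_of_mem h]
      · rw [hk, Set.indicator_of_notMem (show (x, r) ∉ T from h),
          Set.indicator_of_notMem h]
    have hset : A ∩ Set.Ioc (0:ℝ) 1 = Set.Ioc (fV r / fU r) 1 := by
      ext x
      simp only [hA, Set.mem_inter_iff, Set.mem_setOf_eq, Set.mem_Ioc]
      constructor
      · rintro ⟨h1, hx0, hx1⟩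
        refine ⟨?_, hx1⟩
        have := (one_div_lt hx0 hc).mp h1
        rwa [one_div_div] at this
      · rintro ⟨hcx, hx1⟩
        have hx0 : 0 < x := lt_trans hc' hcx
        refine ⟨?_, hx0, hx1⟩
        rw [one_div_lt hx0 hc, one_div_div]
        exact hcx
    calc ∫⁻ x in Set.Ioc (0:ℝ) 1, k (x, r)
        = ∫⁻ x in Set.Ioc (0:ℝ) 1, A.indicator (fun _ => F r) x := by rw [hkr]
      _ = ∫⁻ x in A ∩ Set.Ioc (0:ℝ) 1, F r := by
          rw [lintegral_indicator hAm, Measure.restrict_restrict hAm]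
      _ = F r * volume (Set.Ioc (fV r / fU r) 1) := by rw [hset, setLIntegral_const]
      _ = ENNReal.ofReal (fU r) * ENNReal.ofReal (1 - fV r / fU r) := by
          rw [Real.volume_Ioc]
      _ = ENNReal.ofReal (fU r * (1 - fV r / fU r)) := (ENNReal.ofReal_mul hu0).symm
      _ = ENNReal.ofReal (fU r - fV r) := by
          congr 1
          field_simp
  -- Step E: evaluate the lintegral
  set d : (Fin n → ℝ) → ℝ := fun r => fU r - fV r with hd
  have hdint : Integrable d μ := hUint.sub hVint
  have hdpint : Integrable (fun r => max (d r) 0) μ := hdint.pos_part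
  have hofmax : ∀ a : ℝ, ENNReal.ofReal (max a 0) = ENNReal.ofReal a := by
    intro a
    rcases le_total a 0 with h | h
    · simp [max_eq_right h, ENNReal.ofReal_eq_zero.2 h]
    · rw [max_eq_left h]
  have stepE : ∫⁻ r, ENNReal.ofReal (d r) ∂μ
      = ENNReal.ofReal (∫ r, max (d r) 0 ∂μ) := by
    rw [ofReal_integral_eq_lintegral_ofReal hdpint
      (Filter.Eventually.of_forall fun r => le_max_right _ _)]
    exact lintegral_congr fun r => (hofmax (d r)).symm
  -- Step F: relate to |fV - fU|
  have hId : ∫ r, d r ∂μ = 0 := by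
    rw [hd]
    rw [integral_sub hUint hVint, hUi1, hVi1, sub_self]
  have habs : (fun r => |fV r - fU r|) = fun r => 2 * max (d r) 0 - d r := by
    funext r
    rcases le_total (d r) 0 with h | h
    · rw [max_eq_right h]
      rw [abs_of_nonneg (by simp only [hd] at h ⊢; linarith)]
      simp only [hd]; ring
    · rw [max_eq_left h]
      rw [abs_of_nonpos (by simp only [hd] at h ⊢; linarith)]
      simp only [hd]; ring
  have stepF : (1 / 2 : ℝ) * ∫ r, |fV r - fU r| ∂μ = ∫ r, max (d r) 0 ∂μ := by
    rw [habs, integral_sub (hdpint.const_mul 2) hdint, hId, sub_zero,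
      integral_const_mul]
    ring
  -- conclude
  rw [show (∫ r, |fV r - fU r|) = ∫ r, |fV r - fU r| ∂μ from rfl, stepF, stepB, stepC,
    lintegral_congr_ae stepD]
  rw [show (fun r => ENNReal.ofReal (fU r - fV r)) = fun r => ENNReal.ofReal (d r) from rfl,
    stepE, ENNReal.toReal_ofReal]
  exact integral_nonneg fun r => le_max_right _ _
end

section
/- Fix an odd integer p ≥ 3 and v ∈ [0,1], and define Γ(v,x) = x^p - p·x·v^{p-1} + (p-1)·v^p for x ∈ [-1,1]. If x, y, z ∈ [-1,1] are such that the 2×2 matrix with diagonal entries x, y and off-diagonal entries z is positive semi-definite, then Γ(v,x) + Γ(v,y) + 2Γ(v,z) ≥ 0. -/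
/-!
`Γ(v, ·)` is the gap between `t ^ p` and its tangent line at `v`, so it is nonnegative on `[0, ∞)`.
Positive semi-definiteness gives `x, y ≥ 0` and `z ^ 2 ≤ x y`, so only `z = -w < 0` needs work.
If `w ≤ v`, then `Γ(v, -w) ≥ 0` directly. If `v ≤ w`, then `Γ(v, -·)` decreases on `[v, ∞)` and `w`
may be replaced by `√(x y)`: in this rank-one case `x = a ^ 2`, `y = b ^ 2` the sum equals
`Γ(v, (a - b) ^ 2) + 3 (p - 1) v ^ p + ((a ^ p - b ^ p) ^ 2 - (a - b) ^ (2 p))`, and the last term is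
nonnegative because `|a - b| ^ p ≤ |a ^ p - b ^ p|`.
-/

lemma pow_sub_le_pow_sub_pow {a b : ℝ} {n : ℕ} (hb : 0 ≤ b) (hba : b ≤ a) (hn : n ≠ 0) :
    (a - b) ^ n ≤ a ^ n - b ^ n := by
  have := pow_add_pow_le (sub_nonneg.2 hba) hb hn
  rw [sub_add_cancel] at this
  linarith

lemma abs_sub_pow_le_abs_pow_sub_pow {a b : ℝ} {n : ℕ} (ha : 0 ≤ a) (hb : 0 ≤ b) (hn : n ≠ 0) :
    |a - b| ^ n ≤ |a ^ n - b ^ n| := by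
  wlog hba : b ≤ a generalizing a b
  · rw [abs_sub_comm, abs_sub_comm (a ^ n)]
    exact this hb ha (le_of_not_ge hba)
  rw [abs_of_nonneg (sub_nonneg.2 hba), abs_of_nonneg (sub_nonneg.2 (pow_le_pow_left₀ hb hba n))]
  exact pow_sub_le_pow_sub_pow hb hba hn

lemma sq_sub_pow_le_sq_pow_sub {a b : ℝ} {n : ℕ} (ha : 0 ≤ a) (hb : 0 ≤ b) (hn : n ≠ 0) :
    ((a - b) ^ 2) ^ n ≤ (a ^ n - b ^ n) ^ 2 := by
  rw [← sq_abs (a - b), ← sq_abs (a ^ n - b ^ n), ← pow_mul, mul_comm, pow_mul]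
  gcongr
  exact abs_sub_pow_le_abs_pow_sub_pow ha hb hn

/-- The gap `Γ(v,t)` between `t ^ p` and its tangent line at `v`. -/
def tangentGap (p : ℕ) (v t : ℝ) : ℝ := t ^ p - p * t * v ^ (p - 1) + ((p : ℝ) - 1) * v ^ p

section TangentGap

variable {p : ℕ} {v t w m : ℝ}

lemma tangentGap_eq_of_ne_zero (hp : p ≠ 0) :
    tangentGap p v t = t ^ p - v ^ p - p * v ^ (p - 1) * (t - v) := by
  rw [tangentGap, ← mul_pow_sub_one hp v]
  ring

lemma tangentGap_nonneg (hv : 0 ≤ v) (ht : 0 ≤ t) : 0 ≤ tangentGap p v t := by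
  rcases eq_or_ne p 0 with rfl | hp
  · simp [tangentGap]
  have bernoulli := pow_add_mul_le_add_pow hv (by linarith : 0 ≤ 2 * v + (t - v)) p
  rw [tangentGap_eq_of_ne_zero hp]
  rw [add_sub_cancel] at bernoulli
  linarith

lemma tangentGap_neg_nonneg (hp : Odd p) (hw : 0 ≤ w) (hwv : w ≤ v) :
    0 ≤ tangentGap p v (-w) := by
  have hp1 : (1 : ℝ) ≤ p := by exact_mod_cast hp.pos
  have hwp : w ^ p ≤ w * v ^ (p - 1) := by
    rw [← mul_pow_sub_one hp.pos.ne' w]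
    exact mul_le_mul_of_nonneg_left (pow_le_pow_left₀ hw hwv _) hw
  have hv : 0 ≤ v := hw.trans hwv
  have hrest : 0 ≤ ((p : ℝ) - 1) * (w * v ^ (p - 1) + v ^ p) := by
    have := sub_nonneg.2 hp1
    positivity
  rw [tangentGap, hp.neg_pow]
  nlinarith

lemma tangentGap_neg_le (hp : Odd p) (hv : 0 ≤ v) (hvw : v ≤ w) (hwm : w ≤ m) :
    tangentGap p v (-m) ≤ tangentGap p v (-w) := by
  have hp0 : p ≠ 0 := hp.pos.ne'
  -- the tangent at `w` lies below the convex function `t ^ p` on `[0, ∞)`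
  have tangent := tangentGap_nonneg (p := p) (hv.trans hvw) (hv.trans (hvw.trans hwm))
  rw [tangentGap_eq_of_ne_zero hp0] at tangent
  have slope : (p : ℝ) * v ^ (p - 1) * (m - w) ≤ p * w ^ (p - 1) * (m - w) := by
    gcongr
  rw [tangentGap_eq_of_ne_zero hp0, tangentGap_eq_of_ne_zero hp0, hp.neg_pow, hp.neg_pow]
  linarith

lemma tangentGap_sq_add_sq_add_two_mul_neg_mul_nonneg (hp : Odd p) (hv : 0 ≤ v) {a b : ℝ}
    (ha : 0 ≤ a) (hb : 0 ≤ b) :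
    0 ≤ tangentGap p v (a ^ 2) + tangentGap p v (b ^ 2) + 2 * tangentGap p v (-(a * b)) := by
  have gap := tangentGap_nonneg (p := p) hv (sq_nonneg (a - b))
  have power := sq_sub_pow_le_sq_pow_sub ha hb hp.pos.ne'
  have hp1 : (1 : ℝ) ≤ p := by exact_mod_cast hp.pos
  have const : 0 ≤ ((p : ℝ) - 1) * v ^ p := mul_nonneg (by linarith) (pow_nonneg hv p)
  unfold tangentGap at gap ⊢
  rw [hp.neg_pow, mul_pow, ← pow_mul, ← pow_mul, mul_comm 2 p, pow_mul, pow_mul]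
  linear_combination gap + power + 3 * const

lemma tangentGap_add_add_two_mul_nonneg (hp : Odd p) (hv : 0 ≤ v) {x y z : ℝ} (hx : 0 ≤ x)
    (hy : 0 ≤ y) (hxyz : z ^ 2 ≤ x * y) :
    0 ≤ tangentGap p v x + tangentGap p v y + 2 * tangentGap p v z := by
  rcases le_total 0 z with hz | hz
  · linarith [tangentGap_nonneg (p := p) hv hx, tangentGap_nonneg (p := p) hv hy,
      tangentGap_nonneg (p := p) hv hz]
  obtain ⟨a, ha, rfl⟩ : ∃ a, 0 ≤ a ∧ x = a ^ 2 := ⟨√x, Real.sqrt_nonneg x, (Real.sq_sqrt hx).symm⟩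
  obtain ⟨b, hb, rfl⟩ : ∃ b, 0 ≤ b ∧ y = b ^ 2 := ⟨√y, Real.sqrt_nonneg y, (Real.sq_sqrt hy).symm⟩
  obtain ⟨w, rfl⟩ : ∃ w, z = -w := ⟨-z, (neg_neg z).symm⟩
  have hw : 0 ≤ w := neg_nonpos.1 hz
  have hwab : w ≤ a * b :=
    (pow_le_pow_iff_left₀ hw (mul_nonneg ha hb) two_ne_zero).1 (by rwa [mul_pow, ← neg_sq])
  rcases le_total w v with hwv | hvw
  · linarith [tangentGap_nonneg (p := p) hv (sq_nonneg a),
      tangentGap_nonneg (p := p) hv (sq_nonneg b), tangentGap_neg_nonneg hp hw hwv]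
  · linarith [tangentGap_sq_add_sq_add_two_mul_neg_mul_nonneg hp hv ha hb,
      tangentGap_neg_le hp hv hvw hwab]

end TangentGap

lemma Matrix.PosSemidef.fin_two_of {x y z : ℝ} (h : (!![x, z; z, y]).PosSemidef) :
    0 ≤ x ∧ 0 ≤ y ∧ z ^ 2 ≤ x * y := by
  refine ⟨by simpa using h.diag_nonneg (i := 0), by simpa using h.diag_nonneg (i := 1), ?_⟩
  have := h.det_nonneg
  rw [Matrix.det_fin_two_of] at this
  linarith [sq z]

theorem stmt3_general (p : ℕ) (hodd : Odd p) (v : ℝ) (hv : v ∈ Set.Icc (0:ℝ) 1)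
    (x y z : ℝ)
    (hPSD : (Matrix.of !![x, z; z, y]).PosSemidef) :
    0 ≤ (x ^ p - p * x * v ^ (p - 1) + ((p:ℝ) - 1) * v ^ p)
      + (y ^ p - p * y * v ^ (p - 1) + ((p:ℝ) - 1) * v ^ p)
      + 2 * (z ^ p - p * z * v ^ (p - 1) + ((p:ℝ) - 1) * v ^ p) := by
  obtain ⟨hx, hy, hxyz⟩ := Matrix.PosSemidef.fin_two_of hPSD
  exact tangentGap_add_add_two_mul_nonneg hodd hv.1 hx hy hxyz

/-- For odd `p ≥ 3`, `v ∈ [0,1]`, and `x, y, z ∈ [-1,1]` such that the matrix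
`[[x, z], [z, y]]` is positive semi-definite,
`Γ(v,x) + Γ(v,y) + 2Γ(v,z) ≥ 0` where `Γ(v,x) = x^p - p x v^(p-1) + (p-1) v^p`. -/
theorem stmt3 (p : ℕ) (hp : 3 ≤ p) (hodd : Odd p) (v : ℝ) (hv : v ∈ Set.Icc (0:ℝ) 1)
    (x y z : ℝ) (hx : x ∈ Set.Icc (-1:ℝ) 1) (hy : y ∈ Set.Icc (-1:ℝ) 1)
    (hz : z ∈ Set.Icc (-1:ℝ) 1)
    (hPSD : (Matrix.of !![x, z; z, y]).PosSemidef) :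
    0 ≤ (x ^ p - p * x * v ^ (p - 1) + ((p:ℝ) - 1) * v ^ p)
      + (y ^ p - p * y * v ^ (p - 1) + ((p:ℝ) - 1) * v ^ p)
      + 2 * (z ^ p - p * z * v ^ (p - 1) + ((p:ℝ) - 1) * v ^ p) :=
  stmt3_general p hodd v hv x y z hPSD
end

section
/- Let g be a standard Gaussian random variable. For any fixed s ∈ (0,1] and parameters 0 < β₁ < β₂, define ρ_β(s) = E[ tanh²(β g √(ξ'(s))) · cosh(β g √(ξ'(s))) ] · e^{-β² ξ'(s)/2}, where ξ(s) = s^p/2 for a fixed integer p ≥ 2. Then ρ_{β₁}(s) < ρ_{β₂}(s). -/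
/-!
Since `tanh² u · cosh u = cosh u - 1 / cosh u` and `E[cosh (t g)] = e^{t²/2}`, writing
`t = β √ξ'(s)` gives `ρ_β(s) = 1 - E[e^{-t²/2} / cosh (t g)]`. For each fixed `g` the integrand
is strictly decreasing in `t ≥ 0`: `e^{-t²/2}` strictly decreases and `cosh (t g)` grows with `|t g|`.
-/

open MeasureTheory ProbabilityTheory

/-- `ρ_β(s) = E[tanh²(βg√(ξ'(s))) cosh(βg√(ξ'(s)))] e^{-β²ξ'(s)/2}` for a standard
Gaussian `g`, where `ξ(s) = s^p/2`, so `ξ'(s) = p s^(p-1)/2`. -/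
noncomputable def rhoAux (p : ℕ) (s β : ℝ) : ℝ :=
  (∫ x, Real.tanh (β * x * Real.sqrt ((p:ℝ) * s ^ (p - 1) / 2)) ^ 2
      * Real.cosh (β * x * Real.sqrt ((p:ℝ) * s ^ (p - 1) / 2)) ∂(gaussianReal 0 1))
    * Real.exp (-β ^ 2 * ((p:ℝ) * s ^ (p - 1) / 2) / 2)

open Real
lemma integrable_cosh_mul_gaussianReal (μ : ℝ) (v : NNReal) (a : ℝ) :
    Integrable (fun x ↦ cosh (a * x)) (gaussianReal μ v) := by
  simp_rw [cosh_eq, ← neg_mul]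
  exact ((integrable_exp_mul_gaussianReal a).add (integrable_exp_mul_gaussianReal (-a))).div_const 2

lemma integral_cosh_mul_gaussianReal (v : NNReal) (a : ℝ) :
    ∫ x, cosh (a * x) ∂gaussianReal 0 v = exp (v * a ^ 2 / 2) := by
  have hmgf (t : ℝ) : ∫ x, exp (t * x) ∂gaussianReal 0 v = exp (v * t ^ 2 / 2) := by
    simpa [mgf] using congrFun (mgf_fun_id_gaussianReal (μ := 0) (v := v)) t
  simp_rw [cosh_eq, ← neg_mul]
  rw [integral_div, integral_add (integrable_exp_mul_gaussianReal a)
    (integrable_exp_mul_gaussianReal (-a)), hmgf, hmgf, neg_sq]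
  ring

lemma integrable_inv_cosh_mul {μ : Measure ℝ} [IsFiniteMeasure μ] (a : ℝ) :
    Integrable (fun x ↦ (cosh (a * x))⁻¹) μ := by
  refine Integrable.of_bound (by fun_prop) 1 (Filter.Eventually.of_forall fun x ↦ ?_)
  rw [norm_inv, norm_of_nonneg (cosh_pos _).le]
  exact inv_le_one_of_one_le₀ (one_le_cosh _)

lemma tanh_sq_mul_cosh (u : ℝ) : tanh u ^ 2 * cosh u = cosh u - (cosh u)⁻¹ := by
  have hc : cosh u ≠ 0 := (cosh_pos u).ne'
  rw [tanh_eq_sinh_div_cosh]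
  field_simp
  linear_combination -cosh_sq u

lemma integral_tanh_sq_mul_cosh_gaussianReal (t : ℝ) :
    (∫ x, tanh (t * x) ^ 2 * cosh (t * x) ∂gaussianReal 0 1) * exp (-t ^ 2 / 2)
      = 1 - ∫ x, exp (-t ^ 2 / 2) / cosh (t * x) ∂gaussianReal 0 1 := by
  simp_rw [tanh_sq_mul_cosh, div_eq_mul_inv (exp (-t ^ 2 / 2))]
  rw [integral_sub (integrable_cosh_mul_gaussianReal 0 1 t) (integrable_inv_cosh_mul t),
    integral_cosh_mul_gaussianReal, integral_const_mul, sub_mul, ← exp_add]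
  rw [NNReal.coe_one, one_mul, neg_div, add_neg_cancel, exp_zero, mul_comm]

lemma exp_neg_sq_div_cosh_mul_lt {t₁ t₂ : ℝ} (h₁ : 0 ≤ t₁) (h : t₁ < t₂) (x : ℝ) :
    exp (-t₂ ^ 2 / 2) / cosh (t₂ * x) < exp (-t₁ ^ 2 / 2) / cosh (t₁ * x) := by
  have hexp : exp (-t₂ ^ 2 / 2) < exp (-t₁ ^ 2 / 2) := by gcongr
  have hcosh : cosh (t₁ * x) ≤ cosh (t₂ * x) := by
    rw [cosh_le_cosh, abs_mul, abs_mul]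
    gcongr
  rw [div_lt_div_iff₀ (cosh_pos _) (cosh_pos _)]
  exact mul_lt_mul_of_lt_of_le_of_nonneg_of_pos hexp hcosh (exp_pos _).le (cosh_pos _)

lemma strictAntiOn_integral_exp_neg_sq_div_cosh_mul (μ : Measure ℝ) [IsFiniteMeasure μ]
    [NeZero μ] :
    StrictAntiOn (fun t ↦ ∫ x, exp (-t ^ 2 / 2) / cosh (t * x) ∂μ) (Set.Ici 0) := by
  intro t₁ h₁ t₂ _ h
  have hint (t : ℝ) : Integrable (fun x ↦ exp (-t ^ 2 / 2) / cosh (t * x)) μ := by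
    simpa only [div_eq_mul_inv] using (integrable_inv_cosh_mul t).const_mul _
  have hlt := exp_neg_sq_div_cosh_mul_lt (Set.mem_Ici.1 h₁) h
  rw [← sub_pos, ← integral_sub (hint t₁) (hint t₂),
    integral_pos_iff_support_of_nonneg (fun x ↦ (sub_pos.2 (hlt x)).le)
      ((hint t₁).sub (hint t₂)),
    Function.support_eq_univ fun x ↦ (sub_pos.2 (hlt x)).ne']
  exact Measure.measure_univ_pos.2 (NeZero.ne μ)

lemma rhoAux_eq (p : ℕ) {s : ℝ} (hs : 0 ≤ s) (β : ℝ) :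
    rhoAux p s β = 1 - ∫ x, exp (-(β * √(p * s ^ (p - 1) / 2)) ^ 2 / 2)
      / cosh (β * √(p * s ^ (p - 1) / 2) * x) ∂gaussianReal 0 1 := by
  have hc : √(p * s ^ (p - 1) / 2) ^ 2 = p * s ^ (p - 1) / 2 := sq_sqrt (by positivity)
  rw [← integral_tanh_sq_mul_cosh_gaussianReal, rhoAux, mul_pow, hc, neg_mul]
  simp_rw [mul_right_comm β]

/-- For fixed `s ∈ (0,1]` and `0 < β₁ < β₂`, `ρ_{β₁}(s) < ρ_{β₂}(s)`. -/
theorem stmt9 (p : ℕ) (hp : 2 ≤ p) (s : ℝ) (hs : s ∈ Set.Ioc (0:ℝ) 1)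
    (β₁ β₂ : ℝ) (hβ₁ : 0 < β₁) (hβ : β₁ < β₂) :
    rhoAux p s β₁ < rhoAux p s β₂ := by
  have hp₀ : (0 : ℝ) < p := by exact_mod_cast two_pos.trans_le hp
  have hs₀ : 0 < s := hs.1
  have hc : 0 < √(p * s ^ (p - 1) / 2) := sqrt_pos.2 (by positivity)
  rw [rhoAux_eq p hs₀.le, rhoAux_eq p hs₀.le, sub_lt_sub_iff_left]
  exact strictAntiOn_integral_exp_neg_sq_div_cosh_mul _ (mul_pos hβ₁ hc).le
    (mul_pos (hβ₁.trans hβ) hc).le (mul_lt_mul_of_pos_right hβ hc)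
end
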